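/- Let n be a natural number and let ℓ be a complex number such that ℓ + j ≠ 0 for every integer j with 1 ≤ j ≤ n. Then ∑_{k=0}^{n} (-1/2)^k · binom(n,k) · C(2k+2ℓ, k) / C(k+ℓ, k) equals 2^{-n} · binom(n, n/2) / C(n/2+ℓ, n/2) if n is even, and equals 0 if n is odd. -/

import Mathlib

/-- Generalized binomial coefficient `C(z, m) = (∏_{j=0}^{m-1} (z - j)) / m!` for complex `z`. -/
noncomputable def cbinom (z : ℂ) (m : ℕ) : ℂ :=
  (∏ j ∈ Finset.range m, (z - j)) / (Nat.factorial m)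

/-!
With `w_k = (-1/2)^k C(2k+2ℓ, k) / C(k+ℓ, k)` one has `(2ℓ+k+1) w_{k+1} = -(2ℓ+2k+1) w_k`, and
this makes `S_n = ∑_k binom(n,k) w_k` satisfy `(n+2+2ℓ) S_{n+2} = (n+1) S_n`: multiplied by
`n+2`, the difference of the two sides is termwise the telescoping difference of
`g k = k (k+2ℓ) binom(n+2,k) w_k`. Starting from `S_0 = 1` and `S_1 = 0`, the recurrence yields
both closed forms as long as the factors `n+2+2ℓ` do not vanish. In the even case they cannot
(`ℓ + j ≠ 0`); in the odd case they vanish at finitely many half-integers `ℓ`, which are removed by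
continuity in `ℓ`, since `S_n` is continuous wherever `ℓ + j ≠ 0`.
-/

open Finset Filter Topology Polynomial

theorem ascPochhammer_succ_eval_left {R : Type*} [CommSemiring R] (n : ℕ) (x : R) :
    (ascPochhammer R (n + 1)).eval x = x * (ascPochhammer R n).eval (x + 1) := by
  rw [ascPochhammer_succ_left, eval_mul, eval_X, eval_comp, eval_add, eval_X, eval_one]

theorem ascPochhammer_eval_add_one_ne_zero {R : Type*} [CommRing R] [IsDomain R] {ℓ : R} {n : ℕ}
    (hℓ : ∀ j : ℕ, 1 ≤ j → j ≤ n → ℓ + j ≠ 0) : (ascPochhammer R n).eval (ℓ + 1) ≠ 0 := by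
  rw [Ne, ascPochhammer_eval_eq_zero_iff]
  rintro ⟨j, hj, hjℓ⟩
  exact hℓ (j + 1) (by omega) hj (by push_cast; linear_combination hjℓ)

section BinomSum

variable {R : Type*}

theorem Nat.cast_choose_mul_succ [CommRing R] (n k : ℕ) :
    (n.choose k : R) * (n + 1) = (n + 1).choose k * (n + 1 - k) := by
  rcases le_or_gt k (n + 1) with hk | hk
  · exact_mod_cast congrArg (Nat.cast (R := R)) (Nat.choose_mul_succ_eq n k) |>.trans
      (by push_cast [Nat.cast_sub hk]; ring)
  · rw [Nat.choose_eq_zero_of_lt hk, Nat.choose_eq_zero_of_lt (by omega)]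
    simp

theorem Nat.cast_choose_succ_mul [CommRing R] (n k : ℕ) :
    (n.choose (k + 1) : R) * (k + 1) = n.choose k * (n - k) := by
  rcases le_or_gt k n with hk | hk
  · exact_mod_cast congrArg (Nat.cast (R := R)) (Nat.choose_succ_right_eq n k) |>.trans
      (by push_cast [Nat.cast_sub hk]; ring)
  · rw [Nat.choose_eq_zero_of_lt hk, Nat.choose_eq_zero_of_lt (by omega)]
    simp

def binomSum [Semiring R] (x : ℕ → R) (n : ℕ) : R :=
  ∑ k ∈ range (n + 1), (n.choose k : R) * x k

theorem binomSum_eq_sum_range_of_le [Semiring R] (x : ℕ → R) {n N : ℕ} (h : n ≤ N) :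
    binomSum x n = ∑ k ∈ range (N + 1), (n.choose k : R) * x k := by
  refine sum_subset (range_subset_range.mpr (by omega)) fun k _ hk => ?_
  rw [Nat.choose_eq_zero_of_lt (by simpa using hk), Nat.cast_zero, zero_mul]

theorem binomSum_add_two [CommRing R] {x : ℕ → R} {a : R} (m : ℕ)
    (hx : ∀ k < m + 2, (a + k + 1) * x (k + 1) = -(a + 2 * k + 1) * x k) :
    (m + 2) * ((m + 2 + a) * binomSum x (m + 2)) = (m + 2) * ((m + 1) * binomSum x m) := by
  set g : ℕ → R := fun k => k * (k + a) * ((m + 2).choose k : R) * x k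
  have hterm : ∀ k ∈ range (m + 3), (m + 2) * (m + 2 + a) * ((m + 2).choose k * x k)
      - (m + 2) * (m + 1) * (m.choose k * x k) = g k - g (k + 1) := by
    intro k hk
    have hx' : ((m + 2 : ℕ) - k : R) * ((a + k + 1) * x (k + 1))
        = ((m + 2 : ℕ) - k : R) * (-(a + 2 * k + 1) * x k) := by
      rcases lt_or_eq_of_le (Nat.lt_succ_iff.mp (mem_range.mp hk)) with hk | rfl
      · rw [hx k hk]
      · simp
    have h1 := Nat.cast_choose_mul_succ (R := R) m k
    have h2 := Nat.cast_choose_mul_succ (R := R) (m + 1) k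
    have h3 := Nat.cast_choose_succ_mul (R := R) (m + 2) k
    simp only [g]
    push_cast at hx' h1 h2 h3 ⊢
    linear_combination (-((m : R) + 2) * x k) * h1 - ((m + 1 - k : R) * x k) * h2
      + ((k + 1 + a : R) * x (k + 1)) * h3 + ((m + 2).choose k : R) * hx'
  have hsum := sum_congr rfl hterm
  rw [sum_range_sub', sum_sub_distrib, ← mul_sum, ← mul_sum,
    ← binomSum_eq_sum_range_of_le x (by omega : m ≤ m + 2)] at hsum
  simp only [g, Nat.choose_eq_zero_of_lt (by omega : m + 2 < m + 3), Nat.cast_zero, zero_mul,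
    mul_zero, sub_zero] at hsum
  rw [show binomSum x (m + 2) = ∑ k ∈ range (m + 3), ((m + 2).choose k : R) * x k from rfl]
  linear_combination hsum

end BinomSum

section Weight

variable {K : Type*} [Field K]

/-- `(-1/2)^k C(2k+2ℓ, k) / C(k+ℓ, k)`, written with rising factorials (see `cbinom_div_cbinom`). -/
noncomputable def weight (ℓ : K) (k : ℕ) : K :=
  (-2)⁻¹ ^ k * (ascPochhammer K k).eval (2 * ℓ + k + 1) / (ascPochhammer K k).eval (ℓ + 1)

@[simp]
theorem weight_zero (ℓ : K) : weight ℓ 0 = 1 := by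
  simp [weight]

variable [CharZero K]

theorem weight_succ (ℓ : K) (k : ℕ) (hk : (ascPochhammer K (k + 1)).eval (ℓ + 1) ≠ 0) :
    (2 * ℓ + k + 1) * weight ℓ (k + 1) = -(2 * ℓ + 2 * k + 1) * weight ℓ k := by
  have hnum := ascPochhammer_succ_eval_left (k + 1) (2 * ℓ + k + 1)
  rw [ascPochhammer_succ_eval, ascPochhammer_succ_eval] at hnum
  rw [ascPochhammer_succ_eval] at hk
  rw [weight, weight, ascPochhammer_succ_eval k (ℓ + 1), mul_div_assoc', mul_div_assoc',
    div_eq_div_iff hk (left_ne_zero_of_mul hk),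
    show 2 * ℓ + ((k + 1 : ℕ) : K) + 1 = 2 * ℓ + k + 1 + 1 by push_cast; ring]
  push_cast at hnum
  linear_combination (-(-2 : K)⁻¹ ^ (k + 1) * (ascPochhammer K k).eval (ℓ + 1)) * hnum

theorem binomSum_weight_add_two (ℓ : K) (m : ℕ) (hℓ : ∀ j : ℕ, 1 ≤ j → j ≤ m + 2 → ℓ + j ≠ 0) :
    (m + 2 + 2 * ℓ) * binomSum (weight ℓ) (m + 2) = (m + 1) * binomSum (weight ℓ) m :=
  mul_left_cancel₀ (by exact_mod_cast (m + 1).succ_ne_zero) <| binomSum_add_two m fun k hk =>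
    weight_succ ℓ k (ascPochhammer_eval_add_one_ne_zero fun j h1 h2 => hℓ j h1 (by omega))

theorem binomSum_weight_two_mul (ℓ : K) (a : ℕ) (hℓ : ∀ j : ℕ, 1 ≤ j → j ≤ 2 * a → ℓ + j ≠ 0) :
    binomSum (weight ℓ) (2 * a)
      = 2⁻¹ ^ (2 * a) * a.centralBinom * a.factorial / (ascPochhammer K a).eval (ℓ + 1) := by
  induction a with
  | zero => simp [binomSum]
  | succ a ih =>
    have hrec := binomSum_weight_add_two ℓ (2 * a) fun j h1 h2 => hℓ j h1 (by omega)
    rw [ih fun j h1 h2 => hℓ j h1 (by omega)] at hrec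
    have hs : ℓ + 1 + a ≠ 0 := by
      intro h; exact hℓ (a + 1) (by omega) (by omega) (by push_cast; linear_combination h)
    have hp : (ascPochhammer K a).eval (ℓ + 1) ≠ 0 :=
      ascPochhammer_eval_add_one_ne_zero fun j h1 h2 => hℓ j h1 (by omega)
    have hcb : ((a + 1 : ℕ) : K) * (a + 1).centralBinom = 2 * (2 * a + 1) * a.centralBinom := by
      exact_mod_cast a.succ_mul_centralBinom_succ
    rw [show 2 * (a + 1) = 2 * a + 2 by ring]
    refine mul_left_cancel₀ (show ((2 * a : ℕ) : K) + 2 + 2 * ℓ ≠ 0 by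
      push_cast; intro h; exact hs (by linear_combination h / 2)) (hrec.trans ?_)
    rw [ascPochhammer_succ_eval, Nat.factorial_succ]
    field_simp
    push_cast at hcb ⊢
    linear_combination (-(ℓ + 1 + a) * (1 / 2) ^ (2 * a) * a.factorial / 2 : K) * hcb

theorem binomSum_weight_two_mul_add_one_of_ne (ℓ : K) (a : ℕ)
    (hℓ : ∀ j : ℕ, 1 ≤ j → j ≤ 2 * a + 1 → ℓ + j ≠ 0)
    (hodd : ∀ b ≤ a, 2 * ℓ + (2 * b + 1 : ℕ) ≠ 0) :
    binomSum (weight ℓ) (2 * a + 1) = 0 := by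
  induction a with
  | zero =>
    have h1 := weight_succ ℓ 0 (ascPochhammer_eval_add_one_ne_zero fun j h1 h2 => hℓ j h1 h2)
    have h2 : 2 * ℓ + 1 ≠ 0 := by simpa using hodd 0 le_rfl
    have hw : weight ℓ 1 = -1 := mul_left_cancel₀ h2 (by simpa using h1)
    simp [binomSum, sum_range_succ, hw]
  | succ a ih =>
    have hrec := binomSum_weight_add_two ℓ (2 * a + 1) fun j h1 h2 => hℓ j h1 (by omega)
    rw [ih (fun j h1 h2 => hℓ j h1 (by omega)) (fun b hb => hodd b (by omega)), mul_zero] at hrec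
    refine (mul_eq_zero.mp hrec).resolve_left ?_
    have := hodd (a + 1) le_rfl
    push_cast at this ⊢
    intro h; exact this (by linear_combination h)

end Weight

theorem continuousAt_weight {ℓ : ℂ} {k : ℕ} (hk : (ascPochhammer ℂ k).eval (ℓ + 1) ≠ 0) :
    ContinuousAt (fun z => weight z k) ℓ := by
  unfold weight
  fun_prop (disch := exact hk)

theorem binomSum_weight_two_mul_add_one (ℓ : ℂ) (a : ℕ)
    (hℓ : ∀ j : ℕ, 1 ≤ j → j ≤ 2 * a + 1 → ℓ + j ≠ 0) :
    binomSum (weight ℓ) (2 * a + 1) = 0 := by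
  have hcont : ContinuousAt (fun z => binomSum (weight z) (2 * a + 1)) ℓ :=
    tendsto_finsetSum _ fun k hk => continuousAt_const.mul <| continuousAt_weight <|
      ascPochhammer_eval_add_one_ne_zero fun j h1 h2 => hℓ j h1 (by simp at hk; omega)
  have hgood : ∀ᶠ z : ℂ in 𝓝[≠] ℓ, ∀ j ∈ range (2 * a + 2), z + j ≠ 0 ∧ 2 * z + j ≠ 0 :=
    nhdsNE_le_cofinite ℓ <| (eventually_all_finset _).2 fun j _ =>
      ((eventually_cofinite_ne (-j : ℂ)).and (eventually_cofinite_ne (-j / 2 : ℂ))).mono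
        fun z ⟨hz1, hz2⟩ => ⟨fun h => hz1 (by linear_combination h),
          fun h => hz2 (by linear_combination h / 2)⟩
  have hzero : (fun z => binomSum (weight z) (2 * a + 1)) =ᶠ[𝓝[≠] ℓ] fun _ => 0 := by
    filter_upwards [hgood] with z hz
    exact binomSum_weight_two_mul_add_one_of_ne z a
      (fun j _ hj => (hz j (mem_range.2 (by omega))).1)
      (fun b hb => (hz _ (mem_range.2 (by omega))).2)
  exact ((hcont.eventuallyEq_nhds_iff_eventuallyEq_nhdsNE continuousAt_const).mp hzero).eq_of_nhds

theorem cbinom_eq_ascPochhammer (z : ℂ) (m : ℕ) :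
    cbinom z m = (ascPochhammer ℂ m).eval (z - m + 1) / m.factorial := by
  rw [cbinom, ← descPochhammer_eval_eq_prod_range, descPochhammer_eval_eq_ascPochhammer]

theorem cbinom_div_cbinom (ℓ : ℂ) (k : ℕ) :
    cbinom (2 * k + 2 * ℓ) k / cbinom (k + ℓ) k
      = (ascPochhammer ℂ k).eval (2 * ℓ + k + 1) / (ascPochhammer ℂ k).eval (ℓ + 1) := by
  rw [cbinom_eq_ascPochhammer, cbinom_eq_ascPochhammer,
    div_div_div_cancel_right₀ (Nat.cast_ne_zero.mpr k.factorial_ne_zero)]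
  ring_nf

theorem stmt_1 (n : ℕ) (ℓ : ℂ) (hℓ : ∀ j : ℕ, 1 ≤ j → j ≤ n → ℓ + (j : ℂ) ≠ 0) :
    ∑ k ∈ Finset.range (n + 1),
      (-(1/2) : ℂ) ^ k * (n.choose k : ℂ) * cbinom (2 * (k : ℂ) + 2 * ℓ) k
        / cbinom ((k : ℂ) + ℓ) k
    = if Even n then
        (2 : ℂ)⁻¹ ^ n * (n.choose (n / 2) : ℂ) / cbinom (((n / 2 : ℕ) : ℂ) + ℓ) (n / 2)
      else 0 := by
  have hsum : ∑ k ∈ range (n + 1), (-(1/2) : ℂ) ^ k * (n.choose k : ℂ)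
      * cbinom (2 * (k : ℂ) + 2 * ℓ) k / cbinom ((k : ℂ) + ℓ) k = binomSum (weight ℓ) n := by
    refine sum_congr rfl fun k _ => ?_
    rw [mul_div_assoc, cbinom_div_cbinom, weight]
    ring
  rw [hsum]
  obtain ⟨a, rfl | rfl⟩ := n.even_or_odd'
  · rw [if_pos (even_two_mul a), Nat.mul_div_cancel_left a two_pos, cbinom_eq_ascPochhammer,
      binomSum_weight_two_mul ℓ a hℓ, Nat.centralBinom, add_sub_cancel_left, div_div_eq_mul_div]
  · rw [if_neg (Nat.not_even_two_mul_add_one a), binomSum_weight_two_mul_add_one ℓ a hℓ]
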